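/- arXiv:1802.05167 — 6 statements merged into one kernel-verified Lean document; each statement's English description precedes it below -/
import Mathlib

section
/- For every φ ∈ C_c^∞(ℝ^d \ {0}) one has the identity ⟨φ, -∇·(a - I)·∇ φ⟩ = c(‖x · ∇(|x|^{-1}φ)‖²_{L²} - (d-1)‖|x|^{-1}φ‖²_{L²}), where a(x) = I + c|x|^{-2} x ⊗ x. -/
open MeasureTheory

open Filter Topology

lemma aux_fderiv_norm_inv {d : ℕ} (x : EuclideanSpace ℝ (Fin d)) (hx : x ≠ 0) :
    fderiv ℝ (fun y : EuclideanSpace ℝ (Fin d) => ‖y‖⁻¹) x x = -‖x‖⁻¹ := by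
  have hnx : ‖x‖ ≠ 0 := norm_ne_zero_iff.mpr hx
  have hdiff : DifferentiableAt ℝ (fun y : EuclideanSpace ℝ (Fin d) => ‖y‖⁻¹) x :=
    (((contDiffAt_norm (n := 1) ℝ hx).differentiableAt one_ne_zero)).inv hnx
  have hcurve : HasDerivAt (fun t : ℝ => x + t • x) x 0 := by
    simpa using ((hasDerivAt_id (0:ℝ)).smul_const x).const_add x
  have hF : HasFDerivAt (fun y : EuclideanSpace ℝ (Fin d) => ‖y‖⁻¹)
      (fderiv ℝ (fun y : EuclideanSpace ℝ (Fin d) => ‖y‖⁻¹) x) ((fun t : ℝ => x + t • x) 0) := by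
    simpa using hdiff.hasFDerivAt
  have hcomp : HasDerivAt (fun t : ℝ => ‖x + t • x‖⁻¹)
      (fderiv ℝ (fun y : EuclideanSpace ℝ (Fin d) => ‖y‖⁻¹) x x) 0 :=
    by have h := hF.comp_hasDerivAt 0 hcurve; exact h
  have hexp : HasDerivAt (fun t : ℝ => ((1 + t) * ‖x‖)⁻¹) (-‖x‖⁻¹) 0 := by
    have h1 : HasDerivAt (fun t : ℝ => (1 + t) * ‖x‖) ‖x‖ 0 := by
      simpa using (((hasDerivAt_id (0:ℝ)).const_add 1).mul_const ‖x‖)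
    have h2 := h1.inv (by simpa using hnx)
    refine h2.congr_deriv ?_
    simp only [add_zero, one_mul]
    field_simp
  have heq : (fun t : ℝ => ((1 + t) * ‖x‖)⁻¹) =ᶠ[𝓝 (0:ℝ)] fun t => ‖x + t • x‖⁻¹ := by
    filter_upwards [Ioo_mem_nhds (by norm_num : (-1:ℝ) < 0) (by norm_num : (0:ℝ) < 1)] with t ht
    have h1t : (0:ℝ) < 1 + t := by linarith [ht.1]
    have hxx : x + t • x = (1 + t) • x := by
      rw [add_smul (1:ℝ) t x, one_smul]
    rw [hxx, norm_smul, Real.norm_eq_abs, abs_of_pos h1t]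
  exact hcomp.unique (hexp.congr_of_eventuallyEq heq.symm)

lemma aux_sum_single {d : ℕ} (x : EuclideanSpace ℝ (Fin d)) :
    ∑ i, x i • EuclideanSpace.single i (1:ℝ) = x := by
  ext j
  have h : (∑ i, x i • EuclideanSpace.single i (1:ℝ)) j
      = ∑ i, (x i • EuclideanSpace.single i (1:ℝ)) j := by rw [WithLp.ofLp_sum]; exact Finset.sum_apply j Finset.univ _
  rw [h]
  simp [EuclideanSpace.single_apply]

lemma aux_divergence {d : ℕ} (g : EuclideanSpace ℝ (Fin d) → ℝ) (hg : ContDiff ℝ (⊤ : ℕ∞) g)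
    (hgc : HasCompactSupport g) :
    ∫ x, fderiv ℝ g x x = -(d : ℝ) * ∫ x, g x := by
  obtain ⟨D, hD⟩ := ContDiff.lipschitzWith_of_hasCompactSupport hgc hg (by simp)
  have hgd : Differentiable ℝ g := hg.differentiable (by simp)
  have hfc : Continuous (fderiv ℝ g) := hg.continuous_fderiv (by simp)
  have hfcs : HasCompactSupport (fderiv ℝ g) := hgc.fderiv ℝ
  -- integrability
  have hint : ∀ v : EuclideanSpace ℝ (Fin d) , ∀ i : Fin d,
      Integrable (fun x : EuclideanSpace ℝ (Fin d) => fderiv ℝ g x v * x i) := by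
    intro v i
    apply Continuous.integrable_of_hasCompactSupport
    · have h1 : Continuous fun x : EuclideanSpace ℝ (Fin d) => fderiv ℝ g x v := by fun_prop
      have h2 : Continuous fun x : EuclideanSpace ℝ (Fin d) => x i := by
        have := (PiLp.proj 2 (fun _ : Fin d => ℝ) i : EuclideanSpace ℝ (Fin d) →L[ℝ] ℝ).continuous
        exact this
      exact h1.mul h2
    · apply hfcs.mono
      intro x hx
      simp only [Function.mem_support] at hx ⊢
      intro h; apply hx; rw [h]; simp
  -- for each coordinate
  have key : ∀ i : Fin d, ∫ x, g x =
      ∫ x : EuclideanSpace ℝ (Fin d), -(fderiv ℝ g x (EuclideanSpace.single i (1:ℝ)) * x i) := by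
    intro i
    set L : EuclideanSpace ℝ (Fin d) →L[ℝ] ℝ := PiLp.proj 2 (fun _ : Fin d => ℝ) i with hL
    have hLf : ⇑L = fun x : EuclideanSpace ℝ (Fin d) => x i := rfl
    have hibp := LipschitzWith.integral_lineDeriv_mul_eq (μ := volume) L.lipschitz hD hgc
      (EuclideanSpace.single i (1:ℝ))
    rw [hLf] at hibp
    have hDA : ∀ x : EuclideanSpace ℝ (Fin d), HasFDerivAt (fun x : EuclideanSpace ℝ (Fin d) => x i) L x :=
      fun x => L.hasFDerivAt
    have h1 : ∀ x : EuclideanSpace ℝ (Fin d),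
        lineDeriv ℝ (fun x : EuclideanSpace ℝ (Fin d) => x i) x (EuclideanSpace.single i (1:ℝ)) = 1 := by
      intro x
      rw [(hDA x).differentiableAt.lineDeriv_eq_fderiv, (hDA x).fderiv]
      show (EuclideanSpace.single i (1:ℝ)) i = 1
      simp
    have h2 : ∀ x : EuclideanSpace ℝ (Fin d),
        lineDeriv ℝ g x (-(EuclideanSpace.single i (1:ℝ)))
          = -(fderiv ℝ g x (EuclideanSpace.single i (1:ℝ))) := by
      intro x
      rw [(hgd x).lineDeriv_eq_fderiv, map_neg]
    simp only [h1, h2, one_mul] at hibp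
    simpa [neg_mul] using hibp
  have hpt : ∀ x : EuclideanSpace ℝ (Fin d),
      fderiv ℝ g x x = ∑ i, fderiv ℝ g x (EuclideanSpace.single i (1:ℝ)) * x i := by
    intro x
    have h := congrArg (fun v => fderiv ℝ g x v) (aux_sum_single x)
    simp only at h
    rw [← h, map_sum]
    refine Finset.sum_congr rfl fun i _ => ?_
    rw [(fderiv ℝ g x).map_smul, smul_eq_mul, mul_comm]
  calc ∫ x, fderiv ℝ g x x
      = ∫ x : EuclideanSpace ℝ (Fin d), ∑ i, fderiv ℝ g x (EuclideanSpace.single i (1:ℝ)) * x i := by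
        exact integral_congr_ae (Filter.Eventually.of_forall (fun x => hpt x))
    _ = ∑ i : Fin d, ∫ x : EuclideanSpace ℝ (Fin d), fderiv ℝ g x (EuclideanSpace.single i (1:ℝ)) * x i :=
        integral_finset_sum _ (fun i _ => hint _ i)
    _ = ∑ _i : Fin d, -∫ x, g x := by
        refine Finset.sum_congr rfl fun i _ => ?_
        rw [key i, integral_neg, neg_neg]
    _ = -(d : ℝ) * ∫ x, g x := by
        rw [Finset.sum_const, Finset.card_univ, Fintype.card_fin, nsmul_eq_mul]
        ring

/-- For `φ ∈ C_c^∞(ℝ^d \ {0})`: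
`⟨φ, -∇·(a-I)·∇φ⟩ = c(‖x·∇(|x|⁻¹φ)‖² - (d-1)‖|x|⁻¹φ‖²)`, where the left-hand side
equals `c ∫ |x|⁻² (x·∇φ)²`. -/
theorem stmt_4 (d : ℕ) (hd : 3 ≤ d) (c : ℝ)
    (φ : EuclideanSpace ℝ (Fin d) → ℝ)
    (hφ : ContDiff ℝ (⊤ : ℕ∞) φ) (hsupp : HasCompactSupport φ)
    (h0 : (0 : EuclideanSpace ℝ (Fin d)) ∉ tsupport φ) :
    c * ∫ x, (‖x‖ ^ 2)⁻¹ * (fderiv ℝ φ x x) ^ 2 =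
      c * ((∫ x, (fderiv ℝ (fun y => ‖y‖⁻¹ * φ y) x x) ^ 2)
        - ((d : ℝ) - 1) * ∫ x, (‖x‖⁻¹ * φ x) ^ 2) := by
  set ψ : EuclideanSpace ℝ (Fin d) → ℝ := fun y => ‖y‖⁻¹ * φ y with hψdef
  have hφd : Differentiable ℝ φ := hφ.differentiable (by simp)
  -- smoothness of ψ
  have hψs : ContDiff ℝ (⊤ : ℕ∞) ψ := by
    rw [contDiff_iff_contDiffAt]
    intro x
    by_cases hx : x ∈ tsupport φ
    · have hx0 : x ≠ 0 := fun h => h0 (h ▸ hx)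
      have hnx : ‖x‖ ≠ 0 := norm_ne_zero_iff.mpr hx0
      exact ((contDiffAt_norm ℝ hx0).inv hnx).mul hφ.contDiffAt
    · have hev : ψ =ᶠ[𝓝 x] fun _ => (0:ℝ) := by
        filter_upwards [(isClosed_tsupport φ).isOpen_compl.mem_nhds hx] with y hy
        simp [hψdef, image_eq_zero_of_notMem_tsupport hy]
      exact contDiffAt_const.congr_of_eventuallyEq hev
  have hψd : Differentiable ℝ ψ := hψs.differentiable (by simp)
  have hψc : HasCompactSupport ψ := by
    apply hsupp.mono
    intro x hx
    simp only [Function.mem_support, hψdef] at hx ⊢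
    intro h; exact hx (by rw [h, mul_zero])
  -- continuity facts
  have hfd : Continuous (fderiv ℝ ψ) := hψs.continuous_fderiv (by simp)
  have hG : Continuous (fun x : EuclideanSpace ℝ (Fin d) => fderiv ℝ ψ x x) :=
    Continuous.clm_apply (𝕜 := ℝ) hfd continuous_id
  have hGc : HasCompactSupport (fun x : EuclideanSpace ℝ (Fin d) => fderiv ℝ ψ x x) := by
    apply (hψc.fderiv ℝ).mono
    intro x hx
    simp only [Function.mem_support] at hx ⊢
    intro h; apply hx; rw [h]; simp
  -- integrability
  have I1 : Integrable (fun x : EuclideanSpace ℝ (Fin d) => (fderiv ℝ ψ x x) ^ 2) := by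
    apply Continuous.integrable_of_hasCompactSupport (hG.pow 2)
    apply hGc.mono
    intro x hx
    simp only [Function.mem_support] at hx ⊢
    intro h; exact hx (by simp [h])
  have I2 : Integrable (fun x : EuclideanSpace ℝ (Fin d) => 2 * (ψ x * fderiv ℝ ψ x x)) := by
    apply Continuous.integrable_of_hasCompactSupport
      (continuous_const.mul (hψs.continuous.mul hG))
    apply hψc.mono
    intro x hx
    simp only [Function.mem_support] at hx ⊢
    intro h; exact hx (by simp [h])
  have I3 : Integrable (fun x : EuclideanSpace ℝ (Fin d) => ψ x ^ 2) := by
    apply Continuous.integrable_of_hasCompactSupport (hψs.continuous.pow 2)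
    apply hψc.mono
    intro x hx
    simp only [Function.mem_support] at hx ⊢
    intro h; exact hx (by simp [h])
  -- pointwise identity
  have hpt : ∀ x : EuclideanSpace ℝ (Fin d), (‖x‖ ^ 2)⁻¹ * (fderiv ℝ φ x x) ^ 2
      = (fderiv ℝ ψ x x) ^ 2 + (2 * (ψ x * fderiv ℝ ψ x x) + ψ x ^ 2) := by
    intro x
    by_cases hx : x = 0
    · subst hx
      simp [hψdef]
    · have hnx : ‖x‖ ≠ 0 := norm_ne_zero_iff.mpr hx
      have hninv : DifferentiableAt ℝ (fun y : EuclideanSpace ℝ (Fin d) => ‖y‖⁻¹) x :=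
        ((contDiffAt_norm (n := 1) ℝ hx).differentiableAt one_ne_zero).inv hnx
      have hmul := fderiv_mul hninv (hφd x)
      have happ := congrArg (fun L : EuclideanSpace ℝ (Fin d) →L[ℝ] ℝ => L x) hmul
      simp only [ContinuousLinearMap.add_apply, ContinuousLinearMap.smul_apply,
        smul_eq_mul, aux_fderiv_norm_inv x hx] at happ
      have hkey : fderiv ℝ ψ x x = ‖x‖⁻¹ * fderiv ℝ φ x x - ψ x := by
        rw [hψdef]
        rw [show (fun y : EuclideanSpace ℝ (Fin d) => ‖y‖⁻¹ * φ y) = (fun y => ‖y‖⁻¹) * φ from rfl, happ]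
        simp only [Pi.mul_apply]
        ring
      rw [hkey]
      have hinv : (‖x‖ ^ 2)⁻¹ = ‖x‖⁻¹ * ‖x‖⁻¹ := by rw [sq, mul_inv]
      rw [hinv]
      ring
  -- divergence theorem for ψ²
  have hsqc : HasCompactSupport (fun x : EuclideanSpace ℝ (Fin d) => ψ x * ψ x) := by
    apply hψc.mono
    intro x hx
    simp only [Function.mem_support] at hx ⊢
    intro h; exact hx (by rw [h]; ring)
  have hdiv := aux_divergence (fun x => ψ x * ψ x) (hψs.mul hψs) hsqc
  have hsqd : ∀ x : EuclideanSpace ℝ (Fin d),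
      fderiv ℝ (fun y => ψ y * ψ y) x x = 2 * (ψ x * fderiv ℝ ψ x x) := by
    intro x
    have hm := fderiv_mul (hψd x) (hψd x)
    have happ := congrArg (fun L : EuclideanSpace ℝ (Fin d) →L[ℝ] ℝ => L x) hm
    simp only [ContinuousLinearMap.add_apply, ContinuousLinearMap.smul_apply,
      smul_eq_mul] at happ
    rw [show (fun y => ψ y * ψ y) = ψ * ψ from rfl, happ]; ring
  have hB : (∫ x : EuclideanSpace ℝ (Fin d), 2 * (ψ x * fderiv ℝ ψ x x))
      = -(d : ℝ) * ∫ x : EuclideanSpace ℝ (Fin d), ψ x ^ 2 := by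
    rw [← integral_congr_ae (Filter.Eventually.of_forall hsqd), hdiv]
    congr 1
    exact integral_congr_ae (Filter.Eventually.of_forall (fun x => (pow_two (ψ x)).symm))
  -- put everything together
  have hL : (∫ x : EuclideanSpace ℝ (Fin d), (‖x‖ ^ 2)⁻¹ * (fderiv ℝ φ x x) ^ 2)
      = (∫ x : EuclideanSpace ℝ (Fin d), (fderiv ℝ ψ x x) ^ 2)
        + ((∫ x : EuclideanSpace ℝ (Fin d), 2 * (ψ x * fderiv ℝ ψ x x))
          + ∫ x : EuclideanSpace ℝ (Fin d), ψ x ^ 2) := by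
    have hadd := integral_add I1 (I2.add I3)
    simp only [Pi.add_apply] at hadd
    rw [integral_congr_ae (Filter.Eventually.of_forall hpt), hadd, integral_add I2 I3]
  show c * (∫ x, (‖x‖ ^ 2)⁻¹ * (fderiv ℝ φ x x) ^ 2)
      = c * ((∫ x, (fderiv ℝ ψ x x) ^ 2) - ((d : ℝ) - 1) * ∫ x, ψ x ^ 2)
  rw [hL, hB]
  ring
end

section
/- (Weighted Hardy-type inequality): For every real φ ∈ C_c^∞(ℝ^d \ {0}) and ε > 0, with χ = |x|²/(|x|²+ε), one has (d²/4)∫χ|x|^{-2}φ² - (d+2)∫χ²|x|^{-2}φ² + 3∫χ³|x|^{-2}φ² ≤ ∫χ|x|^{-2}(x·∇φ)². -/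
open MeasureTheory

open Function




lemma aux_int_fderiv (d : ℕ) (h : EuclideanSpace ℝ (Fin d) → ℝ)
    (h1 : ContDiff ℝ (⊤ : ℕ∞) h) (h2 : HasCompactSupport h) (v : EuclideanSpace ℝ (Fin d)) :
    ∫ x, fderiv ℝ h x v = 0 := by
  have hint : Integrable (fun x => fderiv ℝ h x v) := by
    apply Continuous.integrable_of_hasCompactSupport
    · exact (h1.continuous_fderiv (by simp)).clm_apply continuous_const
    · exact h2.fderiv_apply ℝ v
  have key := integral_mul_fderiv_eq_neg_fderiv_mul_of_integrable
    (μ := volume) (f := fun _ : EuclideanSpace ℝ (Fin d) => (1:ℝ)) (g := h) (v := v)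
    ?_ ?_ ?_ (fun x _ => differentiableAt_const _) (fun x _ => h1.differentiable (by simp) x)
  · simpa [fderiv_fun_const] using key
  · simpa [fderiv_fun_const] using (integrable_zero (EuclideanSpace ℝ (Fin d)) ℝ volume)
  · simpa using hint
  · simpa using h1.continuous.integrable_of_hasCompactSupport h2

lemma aux_div (d : ℕ) (g : EuclideanSpace ℝ (Fin d) → ℝ)
    (h1 : ContDiff ℝ (⊤ : ℕ∞) g) (h2 : HasCompactSupport g) :
    ∫ x, ((d:ℝ) * g x + fderiv ℝ g x x) = 0 := by
  classical
  have hdiffc : ∀ i : Fin d, ContDiff ℝ (⊤ : ℕ∞) (fun y : EuclideanSpace ℝ (Fin d) => g y * y i) :=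
    fun i => h1.mul (EuclideanSpace.proj (𝕜 := ℝ) i).contDiff
  have hcs : ∀ i : Fin d, HasCompactSupport (fun y : EuclideanSpace ℝ (Fin d) => g y * y i) :=
    fun i => h2.mul_right
  have key : ∀ x : EuclideanSpace ℝ (Fin d), (d:ℝ) * g x + fderiv ℝ g x x =
      ∑ i : Fin d, fderiv ℝ (fun y => g y * y i) x (EuclideanSpace.single i (1:ℝ)) := by
    intro x
    have hterm : ∀ i : Fin d, fderiv ℝ (fun y => g y * y i) x (EuclideanSpace.single i (1:ℝ))
        = g x + x i * fderiv ℝ g x (EuclideanSpace.single i (1:ℝ)) := by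
      intro i
      have hco : (fun y : EuclideanSpace ℝ (Fin d) => y i)
          = (EuclideanSpace.proj (𝕜 := ℝ) i) := rfl
      have hdg : DifferentiableAt ℝ g x := h1.differentiable (by simp) x
      have hdc : DifferentiableAt ℝ (fun y : EuclideanSpace ℝ (Fin d) => y i) x := by
        rw [hco]; exact (EuclideanSpace.proj (𝕜 := ℝ) i).differentiableAt
      rw [fderiv_fun_mul hdg hdc]
      have hfc : fderiv ℝ (fun y : EuclideanSpace ℝ (Fin d) => y i) x
          = EuclideanSpace.proj (𝕜 := ℝ) i := by
        rw [hco]; exact (EuclideanSpace.proj (𝕜 := ℝ) i).fderiv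
      simp [hfc, EuclideanSpace.single_apply, mul_comm]
    rw [Finset.sum_congr rfl (fun i _ => hterm i), Finset.sum_add_distrib]
    have hx : ∑ i : Fin d, x i • EuclideanSpace.single i (1:ℝ) = x := by
      have := (EuclideanSpace.basisFun (Fin d) ℝ).sum_repr x
      simpa [EuclideanSpace.basisFun_repr, EuclideanSpace.basisFun_apply] using this
    have : ∑ i : Fin d, x i * fderiv ℝ g x (EuclideanSpace.single i (1:ℝ))
        = fderiv ℝ g x x := by
      rw [← hx, map_sum]
      simp [hx]
    rw [this]
    simp [mul_comm]
  rw [integral_congr_ae (Filter.Eventually.of_forall key)]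
  rw [integral_finset_sum]
  · exact Finset.sum_eq_zero fun i _ => aux_int_fderiv d _ (hdiffc i) (hcs i) _
  · intro i _
    apply Continuous.integrable_of_hasCompactSupport
    · exact ((hdiffc i).continuous_fderiv (by simp)).clm_apply continuous_const
    · exact (hcs i).fderiv_apply ℝ _




lemma aux_normsq_fderiv (d : ℕ) (x : EuclideanSpace ℝ (Fin d)) :
    HasFDerivAt (fun y : EuclideanSpace ℝ (Fin d) => ‖y‖^2) ((2:ℝ) • innerSL ℝ x) x := by
  have h := (hasStrictFDerivAt_norm_sq x).hasFDerivAt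
  have : ((2:ℕ) • innerSL ℝ x : EuclideanSpace ℝ (Fin d) →L[ℝ] ℝ) = (2:ℝ) • innerSL ℝ x := by
    rw [← Nat.cast_smul_eq_nsmul ℝ]
    norm_num
  rwa [this] at h

lemma aux_sqrt_fderiv (d : ℕ) (ε : ℝ) (hε : 0 < ε) (x : EuclideanSpace ℝ (Fin d)) :
    HasFDerivAt (fun y : EuclideanSpace ℝ (Fin d) => Real.sqrt (‖y‖^2 + ε))
      ((Real.sqrt (‖x‖^2 + ε))⁻¹ • innerSL ℝ x) x := by
  have hN : HasFDerivAt (fun y : EuclideanSpace ℝ (Fin d) => ‖y‖^2 + ε)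
      ((2:ℝ) • innerSL ℝ x) x := (aux_normsq_fderiv d x).add_const ε
  have hpos : (0:ℝ) < ‖x‖^2 + ε := by positivity
  have := hN.sqrt hpos.ne'
  refine this.congr_fderiv ?_
  rw [smul_smul]
  congr 1
  have hs : Real.sqrt (‖x‖^2 + ε) ≠ 0 := (Real.sqrt_pos.2 hpos).ne'
  field_simp

lemma aux_inv_fderiv (d : ℕ) (ε : ℝ) (hε : 0 < ε) (x : EuclideanSpace ℝ (Fin d)) :
    HasFDerivAt (fun y : EuclideanSpace ℝ (Fin d) => (‖y‖^2 + ε)⁻¹)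
      ((-(((‖x‖^2 + ε)^2)⁻¹)) • ((2:ℝ) • innerSL ℝ x)) x := by
  have hN : HasFDerivAt (fun y : EuclideanSpace ℝ (Fin d) => ‖y‖^2 + ε)
      ((2:ℝ) • innerSL ℝ x) x := (aux_normsq_fderiv d x).add_const ε
  have hpos : (0:ℝ) < ‖x‖^2 + ε := by positivity
  exact (hasDerivAt_inv hpos.ne').comp_hasFDerivAt x hN

lemma aux_chi_deriv (d : ℕ) (ε : ℝ) (hε : 0 < ε) (x : EuclideanSpace ℝ (Fin d)) :
    fderiv ℝ (fun y : EuclideanSpace ℝ (Fin d) => ‖y‖^2 / (‖y‖^2 + ε)) x x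
      = 2 * (‖x‖^2 / (‖x‖^2 + ε)) - 2 * (‖x‖^2 / (‖x‖^2 + ε))^2 := by
  have hpos : (0:ℝ) < ‖x‖^2 + ε := by positivity
  have hN : HasFDerivAt (fun y : EuclideanSpace ℝ (Fin d) => ‖y‖^2)
      ((2:ℝ) • innerSL ℝ x) x := aux_normsq_fderiv d x
  have hI := aux_inv_fderiv d ε hε x
  have hmul := hN.fun_mul hI
  have heq : (fun y : EuclideanSpace ℝ (Fin d) => ‖y‖^2 / (‖y‖^2 + ε))
      = fun y => ‖y‖^2 * (‖y‖^2 + ε)⁻¹ := by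
    funext y; rw [div_eq_mul_inv]
  rw [heq, hmul.fderiv]
  simp only [ContinuousLinearMap.add_apply, ContinuousLinearMap.coe_smul',
    Pi.smul_apply, ContinuousLinearMap.smul_apply, innerSL_apply_apply, smul_eq_mul]
  rw [real_inner_self_eq_norm_sq]
  field_simp
  ring

lemma aux_phi_deriv (d : ℕ) (ε : ℝ) (hε : 0 < ε)
    (φ : EuclideanSpace ℝ (Fin d) → ℝ) (hφ : ContDiff ℝ (⊤ : ℕ∞) φ)
    (x : EuclideanSpace ℝ (Fin d)) :
    fderiv ℝ φ x x
      = (φ x * (Real.sqrt (‖x‖^2 + ε))⁻¹) * (‖x‖^2 / Real.sqrt (‖x‖^2 + ε))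
        + Real.sqrt (‖x‖^2 + ε) *
          fderiv ℝ (fun y => φ y * (Real.sqrt (‖y‖^2 + ε))⁻¹) x x := by
  have hpos : ∀ y : EuclideanSpace ℝ (Fin d), (0:ℝ) < ‖y‖^2 + ε := fun y => by positivity
  have hsne : ∀ y : EuclideanSpace ℝ (Fin d), Real.sqrt (‖y‖^2 + ε) ≠ 0 :=
    fun y => (Real.sqrt_pos.2 (hpos y)).ne'
  set F : EuclideanSpace ℝ (Fin d) → ℝ :=
    fun y => φ y * (Real.sqrt (‖y‖^2 + ε))⁻¹ with hFdef
  have hFsm : ContDiff ℝ (⊤ : ℕ∞) F := by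
    apply hφ.mul
    apply ContDiff.inv _ hsne
    exact (((contDiff_norm_sq ℝ)).add contDiff_const).sqrt (fun y => (hpos y).ne')
  have hFd : HasFDerivAt F (fderiv ℝ F x) x := (hFsm.differentiable (by simp) x).hasFDerivAt
  have hsd := aux_sqrt_fderiv d ε hε x
  have hprod := hFd.mul hsd
  have hphiF : φ = fun y => F y * Real.sqrt (‖y‖^2 + ε) := by
    funext y
    rw [hFdef]
    field_simp
  have hfd : fderiv ℝ φ x
      = F x • ((Real.sqrt (‖x‖^2 + ε))⁻¹ • innerSL ℝ x)
        + Real.sqrt (‖x‖^2 + ε) • fderiv ℝ F x := by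
    rw [hphiF]
    exact hprod.fderiv
  rw [hfd]
  simp only [ContinuousLinearMap.add_apply, ContinuousLinearMap.coe_smul',
    Pi.smul_apply, ContinuousLinearMap.smul_apply, innerSL_apply_apply, smul_eq_mul]
  rw [real_inner_self_eq_norm_sq]
  rw [div_eq_mul_inv]
  ring



/-- Weighted Hardy-type inequality: for real `φ ∈ C_c^∞(ℝ^d \ {0})`, `ε > 0`,
`χ = |x|²/(|x|²+ε)`:
`(d²/4)∫χ|x|⁻²φ² - (d+2)∫χ²|x|⁻²φ² + 3∫χ³|x|⁻²φ² ≤ ∫χ|x|⁻²(x·∇φ)²`. -/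
theorem stmt_10 (d : ℕ) (hd : 1 ≤ d) (ε : ℝ) (hε : 0 < ε)
    (φ : EuclideanSpace ℝ (Fin d) → ℝ)
    (hφ : ContDiff ℝ (⊤ : ℕ∞) φ) (hsupp : HasCompactSupport φ)
    (h0 : (0 : EuclideanSpace ℝ (Fin d)) ∉ tsupport φ)
    (χ : EuclideanSpace ℝ (Fin d) → ℝ)
    (hχ : ∀ y, χ y = ‖y‖ ^ 2 / (‖y‖ ^ 2 + ε)) :
    ((d : ℝ) ^ 2 / 4) * (∫ x, χ x * (‖x‖ ^ 2)⁻¹ * φ x ^ 2)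
        - ((d : ℝ) + 2) * (∫ x, (χ x) ^ 2 * (‖x‖ ^ 2)⁻¹ * φ x ^ 2)
        + 3 * (∫ x, (χ x) ^ 3 * (‖x‖ ^ 2)⁻¹ * φ x ^ 2) ≤
      ∫ x, χ x * (‖x‖ ^ 2)⁻¹ * (fderiv ℝ φ x x) ^ 2 := by
  have hpos : ∀ y : EuclideanSpace ℝ (Fin d), (0:ℝ) < ‖y‖^2 + ε := fun y => by positivity
  have hsne : ∀ y : EuclideanSpace ℝ (Fin d), Real.sqrt (‖y‖^2 + ε) ≠ 0 :=
    fun y => (Real.sqrt_pos.2 (hpos y)).ne'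
  have hs2 : ∀ y : EuclideanSpace ℝ (Fin d), Real.sqrt (‖y‖^2 + ε) ^ 2 = ‖y‖^2 + ε :=
    fun y => Real.sq_sqrt (hpos y).le
  have hχfun : χ = fun y : EuclideanSpace ℝ (Fin d) => ‖y‖^2 / (‖y‖^2 + ε) := funext hχ
  set F : EuclideanSpace ℝ (Fin d) → ℝ :=
    fun y => φ y * (Real.sqrt (‖y‖^2 + ε))⁻¹ with hFdef
  set G : EuclideanSpace ℝ (Fin d) → ℝ := fun y => fderiv ℝ F y y with hGdef
  -- smoothness and supports
  have hssm : ContDiff ℝ (⊤ : ℕ∞) (fun y : EuclideanSpace ℝ (Fin d) => Real.sqrt (‖y‖^2 + ε)) :=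
    ((contDiff_norm_sq ℝ).add contDiff_const).sqrt (fun y => (hpos y).ne')
  have hFsm : ContDiff ℝ (⊤ : ℕ∞) F := hφ.mul (hssm.inv hsne)
  have hχsm : ContDiff ℝ (⊤ : ℕ∞) χ := by
    rw [hχfun]
    exact (contDiff_norm_sq ℝ).div (((contDiff_norm_sq ℝ)).add contDiff_const)
      (fun y => (hpos y).ne')
  have hcsF : HasCompactSupport F := hsupp.mul_right
  have hGcont : Continuous G := by
    rw [hGdef]
    exact (hFsm.continuous_fderiv (by simp)).clm_apply continuous_id
  have hcsG : HasCompactSupport G := by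
    apply (hcsF.fderiv ℝ).mono
    intro x hx
    simp only [Function.mem_support] at hx ⊢
    intro h
    apply hx
    rw [hGdef]
    simp only [h, ContinuousLinearMap.zero_apply]
  have hφ0 : φ 0 = 0 := image_eq_zero_of_notMem_tsupport h0
  -- pointwise identities
  have hχ0 : χ 0 = 0 := by rw [hχ]; simp
  have hF0 : F 0 = 0 := by rw [hFdef]; simp [hφ0]
  have hG0 : G 0 = 0 := by rw [hGdef]; simp
  have hF2 : ∀ x : EuclideanSpace ℝ (Fin d), ‖x‖ ≠ 0 →
      F x ^ 2 = φ x ^ 2 / (‖x‖^2 + ε) := by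
    intro x hx
    rw [hFdef]
    simp only
    rw [mul_pow, inv_pow, hs2 x, div_eq_mul_inv]
  have e1 : ∀ x : EuclideanSpace ℝ (Fin d),
      χ x * (‖x‖ ^ 2)⁻¹ * φ x ^ 2 = F x ^ 2 := by
    intro x
    rcases eq_or_ne x 0 with rfl | hx
    · simp [hχ0, hF0]
    · have hn : ‖x‖ ≠ 0 := norm_ne_zero_iff.mpr hx
      rw [hF2 x hn, hχ x]
      field_simp
  have e2 : ∀ x : EuclideanSpace ℝ (Fin d),
      χ x ^ 2 * (‖x‖ ^ 2)⁻¹ * φ x ^ 2 = χ x * F x ^ 2 := by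
    intro x
    calc χ x ^ 2 * (‖x‖ ^ 2)⁻¹ * φ x ^ 2
        = χ x * (χ x * (‖x‖ ^ 2)⁻¹ * φ x ^ 2) := by ring
      _ = χ x * F x ^ 2 := by rw [e1 x]
  have e3 : ∀ x : EuclideanSpace ℝ (Fin d),
      χ x ^ 3 * (‖x‖ ^ 2)⁻¹ * φ x ^ 2 = χ x ^ 2 * F x ^ 2 := by
    intro x
    calc χ x ^ 3 * (‖x‖ ^ 2)⁻¹ * φ x ^ 2
        = χ x ^ 2 * (χ x * (‖x‖ ^ 2)⁻¹ * φ x ^ 2) := by ring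
      _ = χ x ^ 2 * F x ^ 2 := by rw [e1 x]
  -- derivative of φ in terms of G
  have hDφ : ∀ x : EuclideanSpace ℝ (Fin d),
      fderiv ℝ φ x x = Real.sqrt (‖x‖^2 + ε) * (G x + χ x * F x) := by
    intro x
    rw [aux_phi_deriv d ε hε φ hφ x]
    rw [hχ x]
    rw [hGdef, hFdef]
    simp only
    have h2 := hs2 x
    have hne := hsne x
    field_simp
    linear_combination (-(φ x * ‖x‖^2)) * h2
  have e4 : ∀ x : EuclideanSpace ℝ (Fin d),
      χ x * (‖x‖ ^ 2)⁻¹ * (fderiv ℝ φ x x) ^ 2 = (G x + χ x * F x) ^ 2 := by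
    intro x
    rcases eq_or_ne x 0 with rfl | hx
    · have : fderiv ℝ φ 0 (0 : EuclideanSpace ℝ (Fin d)) = 0 := by simp
      simp [hχ0, hF0, hG0, this]
    · have hn : ‖x‖ ≠ 0 := norm_ne_zero_iff.mpr hx
      rw [hDφ x, hχ x, mul_pow, hs2 x]
      field_simp
  have hDχ : ∀ x : EuclideanSpace ℝ (Fin d),
      fderiv ℝ χ x x = 2 * χ x - 2 * χ x ^ 2 := by
    intro x
    simp only [hχfun]
    exact aux_chi_deriv d ε hε x
  -- integrability
  have hcsF2 : HasCompactSupport (fun x => F x ^ 2) := by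
    have : (fun x => F x ^ 2) = fun x => F x * F x := by funext x; ring
    rw [this]; exact hcsF.mul_right
  have hχcont : Continuous χ := hχsm.continuous
  have hFcont : Continuous F := hFsm.continuous
  have intA : Integrable (fun x => F x ^ 2) :=
    ((hFcont.pow 2).integrable_of_hasCompactSupport hcsF2)
  have intB : Integrable (fun x => χ x * F x ^ 2) :=
    ((hχcont.mul (hFcont.pow 2)).integrable_of_hasCompactSupport hcsF2.mul_left)
  have intC : Integrable (fun x => χ x ^ 2 * F x ^ 2) :=
    (((hχcont.pow 2).mul (hFcont.pow 2)).integrable_of_hasCompactSupport hcsF2.mul_left)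
  have hcsFG : HasCompactSupport (fun x => F x * G x) := hcsG.mul_left
  have intFG : Integrable (fun x => F x * G x) :=
    ((hFcont.mul hGcont).integrable_of_hasCompactSupport hcsFG)
  have intχFG : Integrable (fun x => χ x * (F x * G x)) :=
    ((hχcont.mul (hFcont.mul hGcont)).integrable_of_hasCompactSupport hcsFG.mul_left)
  have hcsG2 : HasCompactSupport (fun x => G x ^ 2) := by
    have : (fun x => G x ^ 2) = fun x => G x * G x := by funext x; ring
    rw [this]; exact hcsG.mul_right
  have intG2 : Integrable (fun x => G x ^ 2) :=
    ((hGcont.pow 2).integrable_of_hasCompactSupport hcsG2)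
  -- IBP 1
  have ibp1 : (d : ℝ) * (∫ x, F x ^ 2) + 2 * (∫ x, F x * G x) = 0 := by
    have hdF2 : ∀ x : EuclideanSpace ℝ (Fin d),
        fderiv ℝ (fun y => F y ^ 2) x x = 2 * (F x * G x) := by
      intro x
      have hdiff : DifferentiableAt ℝ F x := hFsm.differentiable (by simp) x
      have : (fun y => F y ^ 2) = fun y => F y * F y := by funext y; ring
      rw [this, fderiv_fun_mul hdiff hdiff]
      simp only [ContinuousLinearMap.add_apply, ContinuousLinearMap.coe_smul',
        Pi.smul_apply, smul_eq_mul]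
      rw [hGdef]
      ring
    have h := aux_div d (fun x => F x ^ 2) (hFsm.pow 2) hcsF2
    rw [integral_congr_ae (Filter.Eventually.of_forall
      (fun x => by rw [hdF2 x] :
        ∀ x, (d:ℝ) * F x ^ 2 + fderiv ℝ (fun y => F y ^ 2) x x
          = (d:ℝ) * F x ^ 2 + 2 * (F x * G x)))] at h
    rw [integral_add (intA.const_mul _) (intFG.const_mul _),
      integral_const_mul, integral_const_mul] at h
    linarith [h]
  -- IBP 2
  have ibp2 : ((d : ℝ) + 2) * (∫ x, χ x * F x ^ 2) + (-2) * (∫ x, χ x ^ 2 * F x ^ 2)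
      + 2 * (∫ x, χ x * (F x * G x)) = 0 := by
    have hdχF2 : ∀ x : EuclideanSpace ℝ (Fin d),
        fderiv ℝ (fun y => χ y * F y ^ 2) x x
          = (2 * χ x - 2 * χ x ^ 2) * F x ^ 2 + χ x * (2 * (F x * G x)) := by
      intro x
      have hdiffχ : DifferentiableAt ℝ χ x := hχsm.differentiable (by simp) x
      have hdiffF : DifferentiableAt ℝ F x := hFsm.differentiable (by simp) x
      have hdiffF2 : DifferentiableAt ℝ (fun y => F y ^ 2) x := hdiffF.pow 2
      rw [fderiv_fun_mul hdiffχ hdiffF2]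
      simp only [ContinuousLinearMap.add_apply, ContinuousLinearMap.coe_smul',
        Pi.smul_apply, smul_eq_mul]
      have hdF2x : fderiv ℝ (fun y => F y ^ 2) x x = 2 * (F x * G x) := by
        have : (fun y => F y ^ 2) = fun y => F y * F y := by funext y; ring
        rw [this, fderiv_fun_mul hdiffF hdiffF]
        simp only [ContinuousLinearMap.add_apply, ContinuousLinearMap.coe_smul',
          Pi.smul_apply, smul_eq_mul]
        rw [hGdef]; ring
      rw [hdF2x, hDχ x]
      ring
    have h := aux_div d (fun x => χ x * F x ^ 2) (hχsm.mul (hFsm.pow 2)) hcsF2.mul_left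
    rw [integral_congr_ae (Filter.Eventually.of_forall
      (fun x => by rw [hdχF2 x]; ring :
        ∀ x, (d:ℝ) * (χ x * F x ^ 2) + fderiv ℝ (fun y => χ y * F y ^ 2) x x
          = (((d:ℝ) + 2) * (χ x * F x ^ 2) + (-2) * (χ x ^ 2 * F x ^ 2))
            + 2 * (χ x * (F x * G x))))] at h
    have iBC : Integrable (fun x => ((d:ℝ) + 2) * (χ x * F x ^ 2)
        + (-2) * (χ x ^ 2 * F x ^ 2)) := (intB.const_mul _).add (intC.const_mul _)
    rw [integral_add iBC (intχFG.const_mul _),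
      integral_add (intB.const_mul _) (intC.const_mul _),
      integral_const_mul, integral_const_mul, integral_const_mul] at h
    linarith [h]
  -- Hardy
  have hardy : (d : ℝ) ^ 2 / 4 * (∫ x, F x ^ 2) ≤ ∫ x, G x ^ 2 := by
    have hnn : 0 ≤ ∫ x, (G x + ((d:ℝ)/2) * F x) ^ 2 :=
      integral_nonneg fun x => sq_nonneg _
    rw [integral_congr_ae (Filter.Eventually.of_forall
      (fun x => by ring :
        ∀ x : EuclideanSpace ℝ (Fin d), (G x + ((d:ℝ)/2) * F x) ^ 2
          = (G x ^ 2 + (d:ℝ) * (F x * G x)) + ((d:ℝ)^2/4) * F x ^ 2))] at hnn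
    have iGFG : Integrable (fun x => G x ^ 2 + (d:ℝ) * (F x * G x)) :=
      intG2.add (intFG.const_mul _)
    rw [integral_add iGFG (intA.const_mul _), integral_add intG2 (intFG.const_mul _),
      integral_const_mul, integral_const_mul] at hnn
    nlinarith [hnn, ibp1]
  -- rewrite the goal
  rw [integral_congr_ae (Filter.Eventually.of_forall e1),
    integral_congr_ae (Filter.Eventually.of_forall e2),
    integral_congr_ae (Filter.Eventually.of_forall e3),
    integral_congr_ae (Filter.Eventually.of_forall e4)]
  rw [integral_congr_ae (Filter.Eventually.of_forall
    (fun x => by ring :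
      ∀ x : EuclideanSpace ℝ (Fin d), (G x + χ x * F x) ^ 2
        = (G x ^ 2 + 2 * (χ x * (F x * G x))) + χ x ^ 2 * F x ^ 2))]
  have iGχFG : Integrable (fun x => G x ^ 2 + 2 * (χ x * (F x * G x))) :=
    intG2.add (intχFG.const_mul _)
  rw [integral_add iGχFG intC, integral_add intG2 (intχFG.const_mul _),
    integral_const_mul]
  linarith [hardy, ibp2]
end

section
/- Let d ≥ 4, q ≥ d-2, θ = 1/(2(d-1)). Define M(t) = (𝔞t² + 𝔟t + 𝔠₀)t with 𝔞 = (12/q²)(q-1-θ), 𝔟 = -4(q-1-θ)(d+2)/q² + 2(q-2)/q, 𝔠₀ = (d²/q²)(q-1-θ) + 2d/q - 1 - d. Then min_{0 ≤ t ≤ 1} M(t) = M(1) and M(1) < 0. -/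
set_option maxHeartbeats 1600000 in
/-- Let `d ≥ 4`, `q ≥ d-2`, `θ = 1/(2(d-1))`, and
`M(t) = (𝔞t² + 𝔟t + 𝔠₀)t` with `𝔞 = (12/q²)(q-1-θ)`,
`𝔟 = -4(q-1-θ)(d+2)/q² + 2(q-2)/q`, `𝔠₀ = (d²/q²)(q-1-θ) + 2d/q - 1 - d`.
Then `min_{0≤t≤1} M(t) = M(1)` and `M(1) < 0`. -/
theorem stmt_11 (d q : ℝ) (hd : 4 ≤ d) (hq : d - 2 ≤ q)
    (θ 𝔞 𝔟 𝔠₀ : ℝ) (M : ℝ → ℝ)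
    (hθ : θ = 1 / (2 * (d - 1)))
    (ha : 𝔞 = 12 / q ^ 2 * (q - 1 - θ))
    (hb : 𝔟 = -4 * (q - 1 - θ) * (d + 2) / q ^ 2 + 2 * (q - 2) / q)
    (hc : 𝔠₀ = d ^ 2 / q ^ 2 * (q - 1 - θ) + 2 * d / q - 1 - d)
    (hM : ∀ t, M t = (𝔞 * t ^ 2 + 𝔟 * t + 𝔠₀) * t) :
    (∀ t ∈ Set.Icc (0:ℝ) 1, M 1 ≤ M t) ∧ M 1 < 0 := by
  have hq2 : (2:ℝ) ≤ q := by linarith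
  have hq0 : (0:ℝ) < q := by linarith
  have hd1 : (0:ℝ) < d - 1 := by linarith
  have hθv : θ * (2 * (d - 1)) = 1 := by rw [hθ]; field_simp
  have hθpos : 0 < θ := by rw [hθ]; positivity
  have hu : (0:ℝ) ≤ d - 4 := by linarith
  have hv : (0:ℝ) ≤ q - d + 2 := by linarith
  -- endpoint value at t = 0 of the difference quotient: strictly negative
  have key0 : (q - 1 - θ) * (d - 2) ^ 2 + 2 * q * (q + d - 2) - (1 + d) * q ^ 2 < 0 := by
    nlinarith [mul_nonneg hv (sq_nonneg (d - 2)),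
      mul_nonneg (le_of_lt hd1) (sq_nonneg (q - d + 2)),
      mul_pos hθpos (show (0:ℝ) < (d - 2) ^ 2 by nlinarith)]
  have hC0 : 𝔞 + 𝔟 + 𝔠₀ < 0 := by
    have heq : 𝔞 + 𝔟 + 𝔠₀ =
        ((q - 1 - θ) * (d - 2) ^ 2 + 2 * q * (q + d - 2) - (1 + d) * q ^ 2) / q ^ 2 := by
      rw [ha, hb, hc]; field_simp; ring
    rw [heq]
    exact div_neg_of_neg_of_pos key0 (by positivity)
  -- endpoint value at t = 1
  have key1 : 2 * (d - 1) *
      ((q - 1 - θ) * (d ^ 2 - 8 * d + 20) + 4 * q * (q - 2) + 2 * d * q - (1 + d) * q ^ 2) ≤ 0 := by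
    have hz : (d ^ 2 - 8 * d + 20) - θ * (2 * (d - 1)) * (d ^ 2 - 8 * d + 20) = 0 := by
      rw [hθv]; ring
    have hid : 2 * (d - 1) *
        ((q - 1 - θ) * (d ^ 2 - 8 * d + 20) + 4 * q * (q - 2) + 2 * d * q - (1 + d) * q ^ 2)
        = ((d ^ 2 - 8 * d + 20) - θ * (2 * (d - 1)) * (d ^ 2 - 8 * d + 20))
          - (4 + 6 * (q - d + 2) ^ 2 + 24 * ((d - 4) * (q - d + 2))
            + 8 * ((d - 4) * (q - d + 2) ^ 2) + 13 * (d - 4) ^ 2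
            + 14 * ((d - 4) ^ 2 * (q - d + 2)) + 2 * ((d - 4) ^ 2 * (q - d + 2) ^ 2)
            + 4 * ((d - 4) ^ 2 * (d - 4)) + 2 * ((d - 4) ^ 2 * ((d - 4) * (q - d + 2)))) := by
      ring
    rw [hid, hz]
    have h1 : 0 ≤ (d - 4) * (q - d + 2) := mul_nonneg hu hv
    have h2 : 0 ≤ (d - 4) * (q - d + 2) ^ 2 := mul_nonneg hu (sq_nonneg _)
    have h3 : 0 ≤ (d - 4) ^ 2 * (q - d + 2) := mul_nonneg (sq_nonneg _) hv
    have h4 : 0 ≤ (d - 4) ^ 2 * (q - d + 2) ^ 2 := mul_nonneg (sq_nonneg _) (sq_nonneg _)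
    have h5 : 0 ≤ (d - 4) ^ 2 * (d - 4) := mul_nonneg (sq_nonneg _) hu
    have h6 : 0 ≤ (d - 4) ^ 2 * ((d - 4) * (q - d + 2)) := mul_nonneg (sq_nonneg _) h1
    nlinarith [sq_nonneg (q - d + 2), sq_nonneg (d - 4)]
  have key1' : (q - 1 - θ) * (d ^ 2 - 8 * d + 20) + 4 * q * (q - 2) + 2 * d * q
      - (1 + d) * q ^ 2 ≤ 0 := by
    by_contra h
    push_neg at h
    nlinarith [mul_pos hd1 h]
  have hC1 : 3 * 𝔞 + 2 * 𝔟 + 𝔠₀ ≤ 0 := by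
    have heq : 3 * 𝔞 + 2 * 𝔟 + 𝔠₀ =
        ((q - 1 - θ) * (d ^ 2 - 8 * d + 20) + 4 * q * (q - 2) + 2 * d * q - (1 + d) * q ^ 2)
          / q ^ 2 := by
      rw [ha, hb, hc]; field_simp; ring
    rw [heq]
    exact div_nonpos_of_nonpos_of_nonneg key1' (by positivity)
  have hapos : 0 ≤ 𝔞 := by
    rw [ha]
    have hθ1 : θ ≤ 1 := by
      rw [hθ, div_le_one (by linarith)]; linarith
    have h1 : 0 ≤ q - 1 - θ := by linarith
    positivity
  refine ⟨?_, ?_⟩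
  · rintro t ⟨ht0, ht1⟩
    have hht : 𝔞 * (t ^ 2 + t + 1) + 𝔟 * (t + 1) + 𝔠₀ ≤ 0 := by
      have hid2 : 𝔞 * (t ^ 2 + t + 1) + 𝔟 * (t + 1) + 𝔠₀
          = (1 - t) * (𝔞 + 𝔟 + 𝔠₀) + t * (3 * 𝔞 + 2 * 𝔟 + 𝔠₀) + 𝔞 * (t ^ 2 - t) := by ring
      have e1 := mul_nonneg (by linarith : (0:ℝ) ≤ 1 - t) (by linarith : 0 ≤ -(𝔞 + 𝔟 + 𝔠₀))
      have e2 := mul_nonneg ht0 (by linarith : 0 ≤ -(3 * 𝔞 + 2 * 𝔟 + 𝔠₀))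
      have htt : 0 ≤ t - t ^ 2 := by nlinarith [mul_nonneg ht0 (by linarith : (0:ℝ) ≤ 1 - t)]
      have e3 := mul_nonneg hapos htt
      nlinarith [hid2, e1, e2, e3]
    have hdiff : M t - M 1 = (t - 1) * (𝔞 * (t ^ 2 + t + 1) + 𝔟 * (t + 1) + 𝔠₀) := by
      rw [hM, hM]; ring
    have := mul_nonneg (by linarith : (0:ℝ) ≤ -(t - 1)) (by linarith : 0 ≤ -(𝔞 * (t ^ 2 + t + 1) + 𝔟 * (t + 1) + 𝔠₀))
    nlinarith [hdiff, this]
  · rw [hM]; nlinarith [hC0]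
end

section
/- For d ≥ 4 and 0 < c ≤ (d-3)/2, sup over t ∈ [0,1] of (c²t²(d+1-2t)²)/((1+ct)[(d-2)²/4 + ct(d²/4 - (d+2)t + 3t²)]) equals 4((d-1)/(d-2) · c/(1+c))². -/
/-- For `d ≥ 4` and `0 < c ≤ (d-3)/2`, the supremum over `t ∈ [0,1]` of
`c²t²(d+1-2t)² / ((1+ct)[(d-2)²/4 + ct(d²/4 - (d+2)t + 3t²)])` equals
`4((d-1)/(d-2) · c/(1+c))²` (and is attained). -/
theorem stmt_14 (d c : ℝ) (hd : 4 ≤ d) (hc : 0 < c) (hc' : c ≤ (d - 3) / 2) :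
    IsGreatest
      ((fun t => c ^ 2 * t ^ 2 * (d + 1 - 2 * t) ^ 2 /
          ((1 + c * t) * ((d - 2) ^ 2 / 4 + c * t * (d ^ 2 / 4 - (d + 2) * t + 3 * t ^ 2))))
        '' Set.Icc (0:ℝ) 1)
      (4 * ((d - 1) / (d - 2) * (c / (1 + c))) ^ 2) := by
  have hd2 : (0:ℝ) < d - 2 := by linarith
  have h1c : (0:ℝ) < 1 + c := by linarith
  constructor
  · refine ⟨1, Set.mem_Icc.mpr ⟨zero_le_one, le_refl 1⟩, ?_⟩
    have hne : (1:ℝ) + c ≠ 0 := ne_of_gt h1c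
    have hne2 : d - 2 ≠ 0 := ne_of_gt hd2
    have hden : (1 + c * 1) * ((d - 2) ^ 2 / 4 + c * 1 * (d ^ 2 / 4 - (d + 2) * 1 + 3 * 1 ^ 2))
        = (1 + c) ^ 2 * (d - 2) ^ 2 / 4 := by ring
    simp only [hden]
    field_simp
    ring
  · rintro y ⟨t, ⟨ht0, ht1⟩, rfl⟩
    simp only
    have hct : 0 ≤ c * t := mul_nonneg hc.le ht0
    have h1ct : (0:ℝ) < 1 + c * t := by linarith
    have hDge : (1 + c * t) * (d - 2) ^ 2 / 4 ≤
        (d - 2) ^ 2 / 4 + c * t * (d ^ 2 / 4 - (d + 2) * t + 3 * t ^ 2) := by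
      nlinarith [mul_nonneg hct (mul_nonneg (by linarith : (0:ℝ) ≤ 1 - t)
        (by linarith : (0:ℝ) ≤ d - 1 - 3 * t))]
    have hDpos : (0:ℝ) < (d - 2) ^ 2 / 4 + c * t * (d ^ 2 / 4 - (d + 2) * t + 3 * t ^ 2) := by
      have : (0:ℝ) < (1 + c * t) * (d - 2) ^ 2 / 4 := by positivity
      linarith
    have hBpos : (0:ℝ) < (1 + c * t) *
        ((d - 2) ^ 2 / 4 + c * t * (d ^ 2 / 4 - (d + 2) * t + 3 * t ^ 2)) :=
      mul_pos h1ct hDpos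
    have hKpos : (0:ℝ) < (d - 2) ^ 2 * (1 + c) ^ 2 := by positivity
    have hM : 4 * ((d - 1) / (d - 2) * (c / (1 + c))) ^ 2 =
        4 * c ^ 2 * (d - 1) ^ 2 / ((d - 2) ^ 2 * (1 + c) ^ 2) := by
      field_simp
    rw [hM, div_le_div_iff₀ hBpos hKpos]
    -- key ratio bound: t(d+1-2t)(1+c) ≤ (d-1)(1+ct)
    have key1 : t * (d + 1 - 2 * t) * (1 + c) ≤ (d - 1) * (1 + c * t) := by
      nlinarith [mul_nonneg (by linarith : (0:ℝ) ≤ 1 - t)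
        (by nlinarith : (0:ℝ) ≤ d - 1 - 2 * (1 + c) * t)]
    have hnn : 0 ≤ t * (d + 1 - 2 * t) * (1 + c) := by
      have : 0 ≤ d + 1 - 2 * t := by linarith
      positivity
    have key2 : (t * (d + 1 - 2 * t) * (1 + c)) ^ 2 ≤ ((d - 1) * (1 + c * t)) ^ 2 :=
      pow_le_pow_left₀ hnn key1 2
    have h1 := mul_le_mul_of_nonneg_left hDge
      (by positivity : (0:ℝ) ≤ 4 * c ^ 2 * (d - 1) ^ 2 * (1 + c * t))
    have h2 := mul_le_mul_of_nonneg_left key2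
      (by positivity : (0:ℝ) ≤ c ^ 2 * (d - 2) ^ 2)
    linarith [h1, h2]
end

section
/- For d ≥ 3 and -1 < c < 0, sup over t ∈ [0,1] of c²(d+1-2t)²t²/(((d-2)²/4)(1+c)(1+ct)) equals 4((d-1)/(d-2) · c/(1+c))². -/
/-- For `d ≥ 3` and `-1 < c < 0`, the supremum over `t ∈ [0,1]` of
`c²(d+1-2t)²t² / (((d-2)²/4)(1+c)(1+ct))` equals `4((d-1)/(d-2) · c/(1+c))²`
(and is attained). -/
theorem stmt_15 (d c : ℝ) (hd : 3 ≤ d) (hc : -1 < c) (hc' : c < 0) :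
    IsGreatest
      ((fun t => c ^ 2 * (d + 1 - 2 * t) ^ 2 * t ^ 2 /
          (((d - 2) ^ 2 / 4) * (1 + c) * (1 + c * t)))
        '' Set.Icc (0:ℝ) 1)
      (4 * ((d - 1) / (d - 2) * (c / (1 + c))) ^ 2) := by
  have hc1 : 0 < 1 + c := by linarith
  have hd2 : 0 < d - 2 := by linarith
  constructor
  · refine ⟨1, by norm_num, ?_⟩
    have h1 : (1:ℝ) + c * 1 = 1 + c := by ring
    field_simp
    ring
  · rintro x ⟨t, ⟨ht0, ht1⟩, rfl⟩
    have hct : 0 < 1 + c * t := by nlinarith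
    have key : (d + 1 - 2 * t) * t ≤ d - 1 := by nlinarith
    have hnn : 0 ≤ (d + 1 - 2 * t) * t := by nlinarith
    have hsq : ((d + 1 - 2 * t) * t) ^ 2 ≤ (d - 1) ^ 2 := by nlinarith
    have hcc : 1 + c ≤ 1 + c * t := by nlinarith
    have hM : 4 * ((d - 1) / (d - 2) * (c / (1 + c))) ^ 2 =
        4 * (d - 1) ^ 2 * c ^ 2 / ((d - 2) ^ 2 * (1 + c) ^ 2) := by
      field_simp
    simp only
    rw [hM, div_le_div_iff₀ (by positivity) (by positivity)]
    have main : ((d + 1 - 2 * t) * t) ^ 2 * (1 + c) ≤ (d - 1) ^ 2 * (1 + c * t) :=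
      mul_le_mul hsq hcc hc1.le (sq_nonneg _)
    nlinarith [mul_le_mul_of_nonneg_left main
      (by positivity : (0:ℝ) ≤ c ^ 2 * (d - 2) ^ 2 * (1 + c))]
end

section
/- Let d ≥ 4, q > 2, θ = (1/4)(q/(d-2))((q-2)/(q+d-3)). Define M(t) = q^{-1}(𝔞t² + 𝔟t + 𝔠₀)t with 𝔞 = 4(q-2), 𝔟 = 2(2d+1) - q(d+2 - (q-2)/(4θ)), 𝔠₀ = -d(d-1). Then M(0) = M(1) = 0 and max_{0≤t≤1} M(t) = 0, i.e. M(t) ≤ 0 for all t ∈ [0,1]. -/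
/-- Let `d ≥ 4`, `q > 2`, `θ = (1/4)(q/(d-2))((q-2)/(q+d-3))` and
`M(t) = q⁻¹(𝔞t² + 𝔟t + 𝔠₀)t` with `𝔞 = 4(q-2)`,
`𝔟 = 2(2d+1) - q(d+2 - (q-2)/(4θ))`, `𝔠₀ = -d(d-1)`. Then `M(0) = M(1) = 0` and
`M(t) ≤ 0` for all `t ∈ [0,1]`. -/
theorem stmt_17 (d q : ℝ) (hd : 4 ≤ d) (hq : 2 < q)
    (θ 𝔞 𝔟 𝔠₀ : ℝ) (M : ℝ → ℝ)
    (hθ : θ = (1 / 4) * (q / (d - 2)) * ((q - 2) / (q + d - 3)))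
    (ha : 𝔞 = 4 * (q - 2))
    (hb : 𝔟 = 2 * (2 * d + 1) - q * (d + 2 - (q - 2) / (4 * θ)))
    (hc : 𝔠₀ = -(d * (d - 1)))
    (hM : ∀ t, M t = q⁻¹ * (𝔞 * t ^ 2 + 𝔟 * t + 𝔠₀) * t) :
    M 0 = 0 ∧ M 1 = 0 ∧ ∀ t ∈ Set.Icc (0:ℝ) 1, M t ≤ 0 := by
  have hd2 : (0:ℝ) < d - 2 := by linarith
  have hqd3 : (0:ℝ) < q + d - 3 := by linarith
  have hq2 : (0:ℝ) < q - 2 := by linarith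
  have hq0 : (0:ℝ) < q := by linarith
  have hθpos : 0 < θ := by
    rw [hθ]; positivity
  have hkey : (q - 2) / (4 * θ) = (d - 2) * (q + d - 3) / q := by
    rw [hθ]
    field_simp
  have hb' : 𝔟 = d ^ 2 - d + 8 - 4 * q := by
    rw [hb, hkey]
    field_simp
    ring
  refine ⟨by rw [hM]; ring, ?_, ?_⟩
  · rw [hM]
    rw [ha, hb', hc]
    field_simp
    ring
  · intro t ht
    obtain ⟨ht0, ht1⟩ := ht
    rw [hM]
    have hfac : 𝔞 * t ^ 2 + 𝔟 * t + 𝔠₀ = (t - 1) * (𝔞 * t + d * (d - 1)) := by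
      rw [ha, hb', hc]; ring
    rw [hfac]
    have h1 : (t - 1) * (𝔞 * t + d * (d - 1)) ≤ 0 := by
      apply mul_nonpos_of_nonpos_of_nonneg
      · linarith
      · nlinarith
    have hqi : 0 ≤ q⁻¹ := by positivity
    nlinarith [mul_nonneg (mul_nonneg hqi ht0) (neg_nonneg.2 h1)]
end
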